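/- Define a translation ⟨·⟩_v from LTL_F+PM formulas to FO²_M[<] formulas with free variable v ∈ {x,y} (v̄ denoting the other variable) by: ⟨a⟩_v := a(v); ⟨¬φ⟩_v := ¬⟨φ⟩_v; ⟨φ ∧ φ'⟩_v := ⟨φ⟩_v ∧ ⟨φ'⟩_v; ⟨F φ⟩_v := ∃v̄ (v ≤ v̄ ∧ ⟨φ⟩_{v̄}); ⟨PM φ⟩_v := M v̄.((v̄ < v ∧ ⟨φ⟩_{v̄}) ∨ (v̄ ≥ v ∧ wht(v̄))). For an LTL_F+PM formula φ, let ⟨φ⟩ := ψ^FO_shadowy ∧ ∃x (first(x) ∧ ⟨φ⟩_x), where ψ^FO_shadowy is the FO²_M[<] sentence defining shadowy words and first(x) := ¬∃y y < x. Then an LTL_F+PM formula φ has a shadowy finite-word model if and only if the FO²_M[<] sentence ⟨φ⟩ has a finite-word model. -/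

import Mathlib

/-!
On a shadowy word the `wht` positions are exactly the even ones. Hence in `⟨PM φ⟩_v` the
positions from `v` on that carry `wht` contribute a count depending only on `v` and `|w|`, and
the majority over the whole word becomes the past majority of `φ` at `v`; the other cases of the
translation are literal.

That `ψ^FO_shadowy` defines the shadowy words is a counting argument. If `c p` is the number of
`wht` positions before `p`, the two forbidden-pattern formulas, together with `2 c |w| = |w|`,
force `2 c p = p` at a `wht` position and `2 c p = p + 1` at a `shdw` position; by strong
induction on `p` the `wht` positions are then exactly the even ones.
-/

namespace Trans19

abbrev Word := List (Set ℕ)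

/-- Formulas of LTL_F extended with the Past-Majority operator `PM`. -/
inductive PMFormula where
  | atom (a : ℕ)
  | neg (φ : PMFormula)
  | conj (φ ψ : PMFormula)
  | fut (φ : PMFormula)
  | pm (φ : PMFormula)

def PMSat (w : Word) : ℕ → PMFormula → Prop
  | i, .atom a => a ∈ w.getD i ∅
  | i, .neg φ => ¬ PMSat w i φ
  | i, .conj φ ψ => PMSat w i φ ∧ PMSat w i ψ
  | i, .fut φ => ∃ j, i ≤ j ∧ j < w.length ∧ PMSat w j φ
  | i, .pm φ => 2 * Set.ncard {j | j < i ∧ PMSat w j φ} ≥ i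

/-- The two variables x, y. -/
inductive Var where
  | x | y
deriving DecidableEq

/-- The other variable. -/
def Var.other : Var → Var
  | .x => .y
  | .y => .x

/-- Formulas of FO²_M[<]. -/
inductive FO2 where
  | atom (a : ℕ) (v : Var)
  | lt (v v' : Var)
  | eq (v v' : Var)
  | neg (φ : FO2)
  | conj (φ ψ : FO2)
  | ex (v : Var) (φ : FO2)
  | all (v : Var) (φ : FO2)
  | maj (v : Var) (φ : FO2)

def FSat (w : Word) : (Var → ℕ) → FO2 → Prop
  | ρ, .atom a v => a ∈ w.getD (ρ v) ∅
  | ρ, .lt v v' => ρ v < ρ v'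
  | ρ, .eq v v' => ρ v = ρ v'
  | ρ, .neg φ => ¬ FSat w ρ φ
  | ρ, .conj φ ψ => FSat w ρ φ ∧ FSat w ρ ψ
  | ρ, .ex v φ => ∃ p, p < w.length ∧ FSat w (Function.update ρ v p) φ
  | ρ, .all v φ => ∀ p, p < w.length → FSat w (Function.update ρ v p) φ
  | ρ, .maj v φ => 2 * Set.ncard {p | p < w.length ∧ FSat w (Function.update ρ v p) φ} ≥ w.length

def fdisj (φ ψ : FO2) : FO2 := .neg (.conj (.neg φ) (.neg ψ))
def fimpl (φ ψ : FO2) : FO2 := fdisj (.neg φ) ψ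

/-- `Half v. φ := M v. φ ∧ M v. ¬φ`. -/
def halfQ (v : Var) (φ : FO2) : FO2 := .conj (.maj v φ) (.maj v (.neg φ))

/-- `first(v) := ¬∃ v̄. v̄ < v`. -/
def firstF (v : Var) : FO2 := .neg (.ex v.other (.lt v.other v))

/-- The translation `⟨φ⟩_v` from LTL_F+PM to FO²_M[<], parametrised by wht. -/
def tr (wht : ℕ) : Var → PMFormula → FO2
  | v, .atom a => .atom a v
  | v, .neg φ => .neg (tr wht v φ)
  | v, .conj φ ψ => .conj (tr wht v φ) (tr wht v ψ)
  | v, .fut φ => .ex v.other (.conj (fdisj (.lt v v.other) (.eq v v.other)) (tr wht v.other φ))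
  | v, .pm φ => .maj v.other
      (fdisj (.conj (.lt v.other v) (tr wht v.other φ))
             (.conj (fdisj (.lt v v.other) (.eq v v.other)) (.atom wht v.other)))

/-- `udistr_{wht,shdw}`: each position carries exactly one of wht, shdw. -/
def udistr (wht shdw : ℕ) : FO2 :=
  .all .x (.conj (fdisj (.atom wht .x) (.atom shdw .x))
                 (fdisj (.neg (.atom wht .x)) (.neg (.atom shdw .x))))

def φforbidWW (wht shdw : ℕ) : FO2 :=
  fimpl (.atom wht .x)
    (halfQ .y (fdisj (.conj (.lt .y .x) (.atom wht .y))
                     (.conj (.lt .x .y) (.atom shdw .y))))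

def φforbidSS (wht shdw : ℕ) : FO2 :=
  fimpl (.atom shdw .x)
    (halfQ .y (fdisj (.conj (fdisj (.lt .y .x) (.eq .x .y)) (.atom shdw .y))
                     (.conj (.lt .x .y) (.atom wht .y))))

/-- `ψ^FO_shadowy`, the FO²_M[<] sentence defining shadowy words. -/
def ψFOshadowy (wht shdw : ℕ) : FO2 :=
  .conj (.conj (udistr wht shdw)
          (.conj (.ex .x (.conj (firstF .x) (.atom wht .x)))
            (.conj (halfQ .x (.atom wht .x)) (halfQ .x (.atom shdw .x)))))
        (.all .x (.conj (φforbidWW wht shdw) (φforbidSS wht shdw)))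

/-- `⟨φ⟩ := ψ^FO_shadowy ∧ ∃x (first(x) ∧ ⟨φ⟩_x)`. -/
def trSentence (wht shdw : ℕ) (φ : PMFormula) : FO2 :=
  .conj (ψFOshadowy wht shdw) (.ex .x (.conj (firstF .x) (tr wht .x φ)))

def Shadowy (wht shdw : ℕ) (w : Word) : Prop :=
  Even w.length ∧
  (∀ j < w.length, Even j → wht ∈ w.getD j ∅ ∧ shdw ∉ w.getD j ∅) ∧
  (∀ j < w.length, Odd j → shdw ∈ w.getD j ∅ ∧ wht ∉ w.getD j ∅)


open Nat (count count_add count_succ count_eq_card_filter_range)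

section Counting

variable {p q A B : ℕ → Prop} [DecidablePred p] [DecidablePred q] [DecidablePred A]
  [DecidablePred B]

theorem count_congr {n : ℕ} (h : ∀ k < n, p k ↔ q k) : count p n = count q n := by
  simp only [count_eq_card_filter_range]
  exact congrArg Finset.card (Finset.filter_congr fun k hk => h k (Finset.mem_range.mp hk))

theorem count_add_count_not [∀ k, Decidable (¬p k)] (n : ℕ) :
    count p n + count (fun k => ¬p k) n = n := by
  simp only [count_eq_card_filter_range, Finset.card_filter_add_card_filter_not, Finset.card_range]

theorem count_even (n : ℕ) : count Even n = (n + 1) / 2 := by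
  induction n with
  | zero => rfl
  | succ n ih =>
    rw [count_succ, ih]
    split_ifs with h
    · obtain ⟨k, rfl⟩ := h; omega
    · obtain ⟨k, rfl⟩ := Nat.not_even_iff_odd.mp h; omega

theorem count_not_even (n : ℕ) : count (fun k => ¬Even k) n = n / 2 := by
  have := count_add_count_not (p := Even) n
  rw [count_even] at this
  omega

theorem count_splice {m L : ℕ} (hm : m ≤ L) :
    count (fun k => k < m ∧ A k ∨ m ≤ k ∧ B k) L + count B m = count A m + count B L := by
  obtain ⟨d, rfl⟩ := Nat.exists_eq_add_of_le hm
  rw [count_add, count_add (p := B)]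
  have below : count (fun k => k < m ∧ A k ∨ m ≤ k ∧ B k) m = count A m :=
    count_congr fun k hk => by simp [hk]
  have above : count (fun k => m + k < m ∧ A (m + k) ∨ m ≤ m + k ∧ B (m + k)) d =
      count (fun k => B (m + k)) d :=
    count_congr fun k _ => by simp
  omega

end Counting

theorem ncard_setOf_lt_and (P : ℕ → Prop) [DecidablePred P] (n : ℕ) :
    {k | k < n ∧ P k}.ncard = count P n := by
  rw [count_eq_card_filter_range, ← Set.ncard_coe_finset]
  congr 1
  ext k
  simp

theorem Var.ne_other (v : Var) : v ≠ v.other := by cases v <;> decide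

section Semantics

variable {w : Word} {ρ : Var → ℕ} {v : Var} {φ ψ : FO2}

@[simp] theorem fSat_fdisj : FSat w ρ (fdisj φ ψ) ↔ FSat w ρ φ ∨ FSat w ρ ψ := by
  simp only [fdisj, FSat]
  tauto

@[simp] theorem fSat_fimpl : FSat w ρ (fimpl φ ψ) ↔ (FSat w ρ φ → FSat w ρ ψ) := by
  simp only [fimpl, fSat_fdisj, FSat]
  tauto

theorem fSat_maj_iff {P : ℕ → Prop} [DecidablePred P]
    (hP : ∀ p < w.length, FSat w (Function.update ρ v p) φ ↔ P p) :
    FSat w ρ (.maj v φ) ↔ w.length ≤ 2 * count P w.length := by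
  have : {p | p < w.length ∧ FSat w (Function.update ρ v p) φ} = {p | p < w.length ∧ P p} :=
    Set.ext fun p => and_congr_right (hP p)
  rw [FSat, this, ncard_setOf_lt_and, ge_iff_le]

theorem fSat_halfQ_iff {P : ℕ → Prop} [DecidablePred P]
    (hP : ∀ p < w.length, FSat w (Function.update ρ v p) φ ↔ P p) :
    FSat w ρ (halfQ v φ) ↔ 2 * count P w.length = w.length := by
  rw [halfQ, FSat, fSat_maj_iff hP,
    fSat_maj_iff (φ := .neg φ) (P := fun p => ¬P p) fun p hp => not_congr (hP p hp)]
  have := count_add_count_not (p := P) w.length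
  omega

theorem fSat_ex_firstF : FSat w ρ (.ex v (.conj (firstF v) φ)) ↔
    0 < w.length ∧ FSat w (Function.update ρ v 0) φ := by
  simp only [FSat, firstF, Function.update_self, Function.update_of_ne (Var.ne_other v)]
  constructor
  · rintro ⟨p, hp, hfirst, hφ⟩
    obtain rfl : p = 0 := by
      by_contra h0
      exact hfirst ⟨0, by omega, by omega⟩
    exact ⟨hp, hφ⟩
  · rintro ⟨hw, hφ⟩
    exact ⟨0, hw, fun ⟨q, _, hq⟩ => Nat.not_lt_zero q hq, hφ⟩

end Semantics

theorem shadowy_iff {wht shdw : ℕ} {w : Word} :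
    Shadowy wht shdw w ↔ Even w.length ∧
      ∀ p < w.length, (wht ∈ w.getD p ∅ ↔ Even p) ∧ (shdw ∈ w.getD p ∅ ↔ ¬Even p) := by
  refine and_congr_right fun _ => ⟨fun ⟨hev, hodd⟩ p hp => ?_, fun h => ⟨?_, ?_⟩⟩
  · rcases Nat.even_or_odd p with he | ho
    · have := hev p hp he
      tauto
    · have := hodd p hp ho
      have := Nat.not_even_iff_odd.mpr ho
      tauto
  · intro p hp he
    have := h p hp
    tauto
  · intro p hp ho
    have := h p hp
    have := Nat.not_even_iff_odd.mpr ho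
    tauto

open scoped Classical in
theorem fSat_tr {wht shdw : ℕ} {w : Word} (hs : Shadowy wht shdw w) (φ : PMFormula)
    (v : Var) (ρ : Var → ℕ) (hρ : ρ v < w.length) :
    FSat w ρ (tr wht v φ) ↔ PMSat w (ρ v) φ := by
  induction φ generalizing v ρ with
  | atom a => rfl
  | neg φ ih => exact not_congr (ih v ρ hρ)
  | conj φ ψ ihφ ihψ => exact and_congr (ihφ v ρ hρ) (ihψ v ρ hρ)
  | fut φ ih =>
    simp only [tr, FSat, PMSat, fSat_fdisj, Function.update_self,
      Function.update_of_ne (Var.ne_other v)]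
    refine exists_congr fun p => ?_
    constructor
    · rintro ⟨hp, hle, hφ⟩
      exact ⟨by omega, hp, by simpa using (ih _ _ (by simpa using hp)).1 hφ⟩
    · rintro ⟨hle, hp, hφ⟩
      exact ⟨hp, by omega, (ih _ _ (by simpa using hp)).2 (by simpa using hφ)⟩
  | pm φ ih =>
    obtain ⟨hL, hpos⟩ := shadowy_iff.mp hs
    rw [tr, PMSat, ncard_setOf_lt_and]
    refine (fSat_maj_iff (P := fun p => p < ρ v ∧ PMSat w p φ ∨ ρ v ≤ p ∧ Even p)
      fun p hp => ?_).trans ?_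
    · have := ih v.other (Function.update ρ v.other p) (by simpa using hp)
      simp only [Function.update_self] at this
      simp only [fSat_fdisj, FSat, Function.update_self, Function.update_of_ne (Var.ne_other v),
        this, (hpos p hp).1, le_iff_lt_or_eq]
    -- The threshold becomes `2 * ⌈ρ v / 2⌉ ≤ 2 c`, equivalent to `ρ v ≤ 2 c` by parity.
    · have hsplice := count_splice (A := fun p => PMSat w p φ) (B := Even) hρ.le
      rw [count_even, count_even] at hsplice
      obtain ⟨k, hk⟩ := hL
      omega

def ShadowyAxioms (L : ℕ) (W S : ℕ → Prop) [DecidablePred W] [DecidablePred S] : Prop :=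
  (∀ p < L, (W p ∨ S p) ∧ (¬W p ∨ ¬S p)) ∧
  (0 < L ∧ W 0) ∧
  2 * count W L = L ∧ 2 * count S L = L ∧
  ∀ p < L, (W p → 2 * count (fun q => q < p ∧ W q ∨ p < q ∧ S q) L = L) ∧
    (S p → 2 * count (fun q => (q < p ∨ p = q) ∧ S q ∨ p < q ∧ W q) L = L)

section Axioms

variable {L p : ℕ} {W S : ℕ → Prop} [DecidablePred W] [DecidablePred S]

theorem count_forbidWW (hp : p < L) (hSp : ¬S p) :
    count (fun q => q < p ∧ W q ∨ p < q ∧ S q) L + count S p = count W p + count S L := by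
  rw [← count_splice hp.le]
  congr 1
  exact count_congr fun q _ => by grind

theorem count_forbidSS (hp : p < L) :
    count (fun q => (q < p ∨ p = q) ∧ S q ∨ p < q ∧ W q) L + count W (p + 1) =
      count S (p + 1) + count W L := by
  rw [← count_splice (by omega : p + 1 ≤ L)]
  congr 1
  exact count_congr fun q _ => by grind

theorem ShadowyAxioms.two_mul_count (h : ShadowyAxioms L W S) (hp : p < L) :
    2 * count W p = if W p then p else p + 1 := by
  obtain ⟨hpart, -, hW, -, hforbid⟩ := h
  have hWS : ∀ n ≤ L, count W n + count S n = n := fun n hn => by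
    rw [count_congr (p := S) (q := fun k => ¬W k) fun k hk => by have := hpart k (by omega); tauto]
    exact count_add_count_not n
  have := hWS L le_rfl
  split_ifs with hWp
  · have hSp : ¬S p := by have := hpart p hp; tauto
    have := count_forbidWW (W := W) hp hSp
    have := (hforbid p hp).1 hWp
    have := hWS p hp.le
    omega
  · have hSp : S p := by have := hpart p hp; tauto
    have := count_forbidSS (W := W) (S := S) hp
    have := (hforbid p hp).2 hSp
    have := hWS (p + 1) hp
    have := Nat.count_succ_eq_count_iff.mpr hWp
    omega

theorem ShadowyAxioms.iff_even (h : ShadowyAxioms L W S) : ∀ p < L, W p ↔ Even p := by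
  intro p
  induction p using Nat.strong_induction_on with
  | _ p ih =>
    intro hp
    have hcount : count W p = (p + 1) / 2 := by
      rw [count_congr fun q hq => ih q hq (by omega), count_even]
    have := h.two_mul_count hp
    by_cases hWp : W p <;> simp only [hWp, if_true, if_false, true_iff, false_iff,
      Nat.even_iff] at this ⊢ <;> omega

theorem shadowyAxioms_iff : ShadowyAxioms L W S ↔
    Even L ∧ 0 < L ∧ ∀ p < L, (W p ↔ Even p) ∧ (S p ↔ ¬Even p) := by
  constructor
  · intro h
    have hW := h.iff_even
    obtain ⟨hpart, ⟨hL0, -⟩, hhalf, -⟩ := h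
    refine ⟨⟨count W L, by omega⟩, hL0, fun p hp => ⟨hW p hp, ?_⟩⟩
    have := hpart p hp
    have := hW p hp
    tauto
  · rintro ⟨⟨k, rfl⟩, hL0, hpat⟩
    have hW : ∀ n ≤ k + k, count W n = (n + 1) / 2 := fun n hn => by
      rw [count_congr fun q hq => (hpat q (by omega)).1, count_even]
    have hS : ∀ n ≤ k + k, count S n = n / 2 := fun n hn => by
      rw [count_congr fun q hq => (hpat q (by omega)).2, count_not_even]
    refine ⟨fun p hp => ?_, ⟨hL0, (hpat 0 hL0).1.mpr ⟨0, rfl⟩⟩, by rw [hW _ le_rfl]; omega,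
      by rw [hS _ le_rfl]; omega, fun p hp => ⟨fun hWp => ?_, fun hSp => ?_⟩⟩
    · have := hpat p hp
      tauto
    · obtain ⟨j, rfl⟩ := (hpat p hp).1.mp hWp
      have := count_forbidWW (W := W) hp (fun hSp => (hpat _ hp).2.mp hSp ⟨j, rfl⟩)
      rw [hW _ hp.le, hS _ hp.le, hS _ le_rfl] at this
      omega
    · obtain ⟨j, rfl⟩ := Nat.not_even_iff_odd.mp ((hpat p hp).2.mp hSp)
      have := count_forbidSS (W := W) (S := S) hp
      rw [hW _ hp, hS _ hp, hW _ le_rfl] at this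
      omega

end Axioms

section ShadowySentence

open scoped Classical

variable {wht shdw : ℕ} {w : Word} {ρ : Var → ℕ}

theorem fSat_udistr : FSat w ρ (udistr wht shdw) ↔
    ∀ p < w.length, (wht ∈ w.getD p ∅ ∨ shdw ∈ w.getD p ∅) ∧
      (wht ∉ w.getD p ∅ ∨ shdw ∉ w.getD p ∅) := by
  simp only [udistr, FSat, fSat_fdisj, Function.update_self]

theorem fSat_φforbidWW : FSat w ρ (φforbidWW wht shdw) ↔
    (wht ∈ w.getD (ρ .x) ∅ → 2 * count (fun q => q < ρ .x ∧ wht ∈ w.getD q ∅ ∨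
      ρ .x < q ∧ shdw ∈ w.getD q ∅) w.length = w.length) := by
  rw [φforbidWW, fSat_fimpl]
  exact imp_congr_right fun _ => fSat_halfQ_iff fun q _ => by simp [FSat]

theorem fSat_φforbidSS : FSat w ρ (φforbidSS wht shdw) ↔
    (shdw ∈ w.getD (ρ .x) ∅ → 2 * count (fun q => (q < ρ .x ∨ ρ .x = q) ∧ shdw ∈ w.getD q ∅ ∨
      ρ .x < q ∧ wht ∈ w.getD q ∅) w.length = w.length) := by
  rw [φforbidSS, fSat_fimpl]
  exact imp_congr_right fun _ => fSat_halfQ_iff fun q _ => by simp [FSat]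

theorem fSat_ψFOshadowy_iff_axioms : FSat w ρ (ψFOshadowy wht shdw) ↔
    ShadowyAxioms w.length (fun p => wht ∈ w.getD p ∅) (fun p => shdw ∈ w.getD p ∅) := by
  rw [ψFOshadowy, FSat, FSat, FSat, fSat_ex_firstF]
  simp only [FSat, fSat_udistr, fSat_φforbidWW, fSat_φforbidSS, Function.update_self,
    fSat_halfQ_iff fun _ _ => Iff.rfl, ShadowyAxioms, and_assoc]

theorem fSat_ψFOshadowy : FSat w ρ (ψFOshadowy wht shdw) ↔ w ≠ [] ∧ Shadowy wht shdw w := by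
  rw [fSat_ψFOshadowy_iff_axioms, shadowyAxioms_iff, shadowy_iff, ← List.length_pos_iff]
  tauto

theorem fSat_trSentence {φ : PMFormula} :
    FSat w ρ (trSentence wht shdw φ) ↔ w ≠ [] ∧ Shadowy wht shdw w ∧ PMSat w 0 φ := by
  rw [trSentence, FSat, fSat_ψFOshadowy, fSat_ex_firstF]
  have htr (hs : Shadowy wht shdw w) (hw : w ≠ []) :
      FSat w (Function.update ρ .x 0) (tr wht .x φ) ↔ PMSat w 0 φ := by
    simpa using
      fSat_tr hs φ .x (Function.update ρ .x 0) (by simpa using List.length_pos_iff.mpr hw)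
  constructor
  · rintro ⟨⟨hw, hs⟩, -, hφ⟩
    exact ⟨hw, hs, (htr hs hw).mp hφ⟩
  · rintro ⟨hw, hs, hφ⟩
    exact ⟨⟨hw, hs⟩, List.length_pos_iff.mpr hw, (htr hs hw).mpr hφ⟩

end ShadowySentence

theorem translation_correct_general (wht shdw : ℕ) (φ : PMFormula) :
    (∃ w : Word, w ≠ [] ∧ Shadowy wht shdw w ∧ PMSat w 0 φ) ↔
    (∃ w : Word, w ≠ [] ∧ FSat w (fun _ => 0) (trSentence wht shdw φ)) := by
  simp only [fSat_trSentence]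
  exact exists_congr fun w => by tauto

/-- An LTL_F+PM formula has a shadowy model iff its translation has a model. -/
theorem translation_correct (wht shdw : ℕ) (hne : wht ≠ shdw) (φ : PMFormula) :
    (∃ w : Word, w ≠ [] ∧ Shadowy wht shdw w ∧ PMSat w 0 φ) ↔
    (∃ w : Word, w ≠ [] ∧ FSat w (fun _ => 0) (trSentence wht shdw φ)) :=
  translation_correct_general wht shdw φ

end Trans19
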